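/- Let $s \in S$ and suppose $v,w \in W$ have a join $v \vee w$ under the Bruhat order. Then $\psi_s(v)$ and $\psi_s(w)$ have a join under the Bruhat order, and it equals $\psi_s(v \vee w)$. -/

import Mathlib

namespace PaperStmt

open scoped Classical

variable {B : Type*} {W : Type*} [Group W] {M : CoxeterMatrix B}

/-- Bruhat (strong) cover: `v = t * u` for a reflection `t`, with `ℓ v = ℓ u + 1`. -/
def BruhatCov (cs : CoxeterSystem M W) (u v : W) : Prop :=
  cs.length v = cs.length u + 1 ∧ ∃ t : W, cs.IsReflection t ∧ v = t * u

/-- The Bruhat (strong) order, generated by the covering relations. -/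
def BruhatLe (cs : CoxeterSystem M W) : W → W → Prop :=
  Relation.ReflTransGen (BruhatCov cs)

/-- Strict Bruhat order. -/
def BruhatLt (cs : CoxeterSystem M W) (u v : W) : Prop :=
  BruhatLe cs u v ∧ u ≠ v

/-- Left weak order: `u ≤_L v` iff `ℓ(v u⁻¹) + ℓ u = ℓ v`. -/
def leftLe (cs : CoxeterSystem M W) (u v : W) : Prop :=
  cs.length (v * u⁻¹) + cs.length u = cs.length v

/-- Right weak order: `u ≤_R v` iff `ℓ u + ℓ(u⁻¹ v) = ℓ v`. -/
def rightLe (cs : CoxeterSystem M W) (u v : W) : Prop :=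
  cs.length u + cs.length (u⁻¹ * v) = cs.length v

/-- Demazure action of a simple reflection: `φ_s(x) = s x` if `s x > x`, else `x`. -/
noncomputable def phi (cs : CoxeterSystem M W) (i : B) (x : W) : W :=
  if BruhatLt cs x (cs.simple i * x) then cs.simple i * x else x

/-- Anti-Demazure action: `ψ_s(x) = s x` if `s x < x`, else `x`. -/
noncomputable def psi (cs : CoxeterSystem M W) (i : B) (x : W) : W :=
  if BruhatLt cs (cs.simple i * x) x then cs.simple i * x else x

/-- Right anti-Demazure action: `ψ^R_s(x) = x s` if `x s < x`, else `x`. -/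
noncomputable def psiR (cs : CoxeterSystem M W) (i : B) (x : W) : W :=
  if BruhatLt cs (x * cs.simple i) x then x * cs.simple i else x

/-- `φ_w` along a word `w = s_1 ⋯ s_n`: `φ_{s_1} ∘ ⋯ ∘ φ_{s_n}`. -/
noncomputable def phiWord (cs : CoxeterSystem M W) (ω : List B) (x : W) : W :=
  ω.foldr (phi cs) x

/-- `ψ_w` along a word `w = s_1 ⋯ s_n`: `ψ_{s_1} ∘ ⋯ ∘ ψ_{s_n}`. -/
noncomputable def psiWord (cs : CoxeterSystem M W) (ω : List B) (x : W) : W :=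
  ω.foldr (psi cs) x

/-- `ψ^R_w` along a word `w = s_1 ⋯ s_n`: `ψ^R_{s_n} ∘ ⋯ ∘ ψ^R_{s_1}`. -/
noncomputable def psiRWord (cs : CoxeterSystem M W) (ω : List B) (x : W) : W :=
  ω.foldl (fun y i => psiR cs i y) x

/-!
`ψ_s` is left adjoint to the Demazure action `φ_s` for the Bruhat order:
`ψ_s x ≤ z ↔ x ≤ φ_s z`, because both maps are monotone, `x ≤ φ_s (ψ_s x)` and
`ψ_s (φ_s z) ≤ z`. A left adjoint preserves every join that exists.

Monotonicity is checked on covers `u ⋖ t u`; the only non-obvious case is `s u > u`,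
`s t u < t u`, where the strong exchange property forces `s u = t u`. Strong exchange comes
from the action of `W` on `W × ZMod 2` in which `s` sends `(x, ε)` to `(s x s, ε + [x = s])`:
its second coordinate is a cocycle counting, mod 2, the occurrences of a reflection in the
right inversion sequence of any word, and it equals `1` at every right inversion.
-/

open CoxeterSystem

section ParityAction

variable {G : Type*} [Group G]

lemma conj_eq_iff (c x y : G) : c * x * c⁻¹ = y ↔ x = c⁻¹ * y * c := by
  constructor <;> rintro rfl <;> group

variable [DecidableEq G]

def parityAct (a : G) : Function.End (G × ZMod 2) :=
  fun x => (a * x.1 * a⁻¹, x.2 + if x.1 = a then 1 else 0)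

lemma parityAct_mul_pow_apply {a b : G} (ha : a * a = 1) (hb : b * b = 1) (k : ℕ)
    (x : G × ZMod 2) :
    ((parityAct a * parityAct b) ^ k) x = ((a * b) ^ k * x.1 * ((a * b) ^ k)⁻¹,
      x.2 + ∑ r ∈ Finset.range (2 * k), if x.1 = b * (a * b) ^ r then 1 else 0) := by
  induction k generalizing x with
  | zero => simp; rfl
  | succ k ih =>
    have hcb : (a * b)⁻¹ * b = b * (a * b) := by
      rw [mul_inv_rev, inv_eq_of_mul_eq_one_right ha, inv_eq_of_mul_eq_one_right hb, mul_assoc]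
    have hshift (r : ℕ) : (a * b) * x.1 * (a * b)⁻¹ = b * (a * b) ^ r ↔
        x.1 = b * (a * b) ^ (r + 2) := by
      rw [conj_eq_iff, ← mul_assoc (a * b)⁻¹ b, hcb, pow_succ, pow_succ']
      simp only [mul_assoc]
    have hstep : (parityAct a * parityAct b) x = ((a * b) * x.1 * (a * b)⁻¹,
        x.2 + (if x.1 = b * (a * b) ^ 0 then 1 else 0) +
          if x.1 = b * (a * b) ^ 1 then 1 else 0) := by
      have : b * x.1 * b⁻¹ = a ↔ x.1 = b * (a * b) := by
        rw [conj_eq_iff, inv_eq_of_mul_eq_one_right hb, mul_assoc]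
      change (a * (b * x.1 * b⁻¹) * a⁻¹,
        x.2 + (if x.1 = b then 1 else 0) + if b * x.1 * b⁻¹ = a then 1 else 0) = _
      simp only [this, pow_zero, pow_one, mul_one, mul_inv_rev]
      congr 1
      group
    rw [pow_succ]
    change ((parityAct a * parityAct b) ^ k) ((parityAct a * parityAct b) x) = _
    rw [hstep, ih]
    simp only [hshift]
    refine Prod.ext ?_ ?_
    · simp only [pow_succ, mul_inv_rev]
      group
    · rw [show 2 * (k + 1) = 2 * k + 1 + 1 by ring, Finset.sum_range_succ', Finset.sum_range_succ']
      ring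

end ParityAction

section ReflectionCocycle

variable (cs : CoxeterSystem M W)

lemma isLiftable_parityAct : M.IsLiftable (fun i => parityAct (cs.simple i)) := by
  intro i j
  funext x
  have hc := cs.simple_mul_simple_pow i j
  have hperiodic (r : ℕ) : (cs.simple i * cs.simple j) ^ (M i j + r) =
      (cs.simple i * cs.simple j) ^ r := by
    rw [pow_add, hc, one_mul]
  rw [parityAct_mul_pow_apply (cs.simple_mul_simple_self i) (cs.simple_mul_simple_self j), hc,
    two_mul, Finset.sum_range_add]
  simp only [hperiodic, CharTwo.add_self_eq_zero, add_zero, one_mul, inv_one, mul_one]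
  rfl

noncomputable def parityRep : W →* Function.End (W × ZMod 2) :=
  cs.lift ⟨_, isLiftable_parityAct cs⟩

lemma parityRep_simple (i : B) : parityRep cs (cs.simple i) = parityAct (cs.simple i) :=
  cs.lift_apply_simple (isLiftable_parityAct cs) i

lemma parityRep_wordProd (ω : List B) (x : W × ZMod 2) :
    parityRep cs (cs.wordProd ω) x =
      (cs.wordProd ω * x.1 * (cs.wordProd ω)⁻¹, x.2 + (cs.rightInvSeq ω).count x.1) := by
  induction ω with
  | nil => simp; rfl
  | cons i ω ih =>
    rw [cs.wordProd_cons, map_mul]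
    change parityRep cs (cs.simple i) (parityRep cs (cs.wordProd ω) x) = _
    rw [ih, parityRep_simple, rightInvSeq, List.count_cons]
    simp only [parityAct, conj_eq_iff, beq_iff_eq, eq_comm (a := x.1)]
    refine Prod.ext ?_ ?_
    · simp only [mul_inv_rev]
      group
    · push_cast
      ring

noncomputable def reflCocycle (w t : W) : ZMod 2 :=
  (parityRep cs w (t, 0)).2

lemma reflCocycle_wordProd (ω : List B) (t : W) :
    reflCocycle cs (cs.wordProd ω) t = (cs.rightInvSeq ω).count t := by
  rw [reflCocycle, parityRep_wordProd, zero_add]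

lemma parityRep_apply (w : W) (x : W × ZMod 2) :
    parityRep cs w x = (w * x.1 * w⁻¹, x.2 + reflCocycle cs w x.1) := by
  obtain ⟨ω, rfl⟩ := cs.wordProd_surjective w
  rw [parityRep_wordProd, reflCocycle_wordProd]

lemma reflCocycle_one (t : W) : reflCocycle cs 1 t = 0 := by
  rw [reflCocycle, map_one]
  rfl

lemma reflCocycle_mul (u v t : W) :
    reflCocycle cs (u * v) t = reflCocycle cs v t + reflCocycle cs u (v * t * v⁻¹) := by
  rw [reflCocycle, map_mul]
  change (parityRep cs u (parityRep cs v (t, 0))).2 = _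
  rw [parityRep_apply cs v, parityRep_apply cs u, zero_add]

lemma reflCocycle_simple_self (i : B) : reflCocycle cs (cs.simple i) (cs.simple i) = 1 := by
  rw [reflCocycle, parityRep_simple]
  simp [parityAct]

variable {cs}

lemma reflCocycle_self_of_isReflection {t : W} (ht : cs.IsReflection t) :
    reflCocycle cs t t = 1 := by
  obtain ⟨v, i, rfl⟩ := ht
  have hconj : v⁻¹ * (v * cs.simple i * v⁻¹) * v⁻¹⁻¹ = cs.simple i := by group
  have hcancel := reflCocycle_mul cs v v⁻¹ (v * cs.simple i * v⁻¹)
  rw [mul_inv_cancel, reflCocycle_one, hconj] at hcancel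
  rw [reflCocycle_mul, hconj, reflCocycle_mul, reflCocycle_simple_self, mul_inv_cancel_right]
  linear_combination -hcancel

end ReflectionCocycle

section Inversion

variable {cs : CoxeterSystem M W}

lemma reflCocycle_eq_zero_of_not_isRightInversion {w t : W} (h : ¬ cs.IsRightInversion w t) :
    reflCocycle cs w t = 0 := by
  obtain ⟨ρ, hρ, rfl⟩ := cs.exists_isReduced w
  rw [reflCocycle_wordProd, List.count_eq_zero.mpr
    (fun hmem => h (cs.isRightInversion_of_mem_rightInvSeq hρ hmem)), Nat.cast_zero]

lemma reflCocycle_eq_one_of_isRightInversion {w t : W} (h : cs.IsRightInversion w t) :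
    reflCocycle cs w t = 1 := by
  have ht := h.1
  have hwt : ¬ cs.IsRightInversion (w * t) t := ht.not_isRightInversion_mul_left_iff.mpr h
  rw [← mul_inv_cancel_right w t, ht.inv, reflCocycle_mul, reflCocycle_self_of_isReflection ht,
    mul_inv_cancel_right, reflCocycle_eq_zero_of_not_isRightInversion hwt, add_zero]

theorem mem_rightInvSeq_of_isRightInversion {ω : List B} {t : W}
    (h : cs.IsRightInversion (cs.wordProd ω) t) : t ∈ cs.rightInvSeq ω := by
  by_contra hmem
  have := reflCocycle_eq_one_of_isRightInversion h
  rw [reflCocycle_wordProd, List.count_eq_zero.mpr hmem, Nat.cast_zero] at this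
  exact zero_ne_one this

theorem mem_leftInvSeq_of_isLeftInversion {ω : List B} {t : W}
    (h : cs.IsLeftInversion (cs.wordProd ω) t) : t ∈ cs.leftInvSeq ω := by
  rw [← cs.isRightInversion_inv_iff, ← cs.wordProd_reverse] at h
  simpa [cs.rightInvSeq_reverse] using mem_rightInvSeq_of_isRightInversion h

end Inversion

section Bruhat

open Relation

variable {cs : CoxeterSystem M W} {i : B} {u w x z : W}

lemma BruhatLe.length_le (h : BruhatLe cs u w) : cs.length u ≤ cs.length w := by
  induction h with
  | refl => exact le_rfl
  | tail _ hcov ih => exact ih.trans (hcov.1 ▸ Nat.le_succ _)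

lemma bruhatCov_simple_mul (h : ¬ cs.IsLeftDescent x i) : BruhatCov cs x (cs.simple i * x) :=
  ⟨cs.not_isLeftDescent_iff.mp h, _, cs.isReflection_simple i, rfl⟩

lemma bruhatCov_simple_mul_of_isLeftDescent (h : cs.IsLeftDescent x i) :
    BruhatCov cs (cs.simple i * x) x :=
  ⟨(cs.isLeftDescent_iff.mp h).symm, _, cs.isReflection_simple i,
    (cs.simple_mul_simple_cancel_left i).symm⟩

lemma simple_mul_ne_self : cs.simple i * x ≠ x :=
  fun h => cs.length_simple_mul_ne x i (congrArg cs.length h)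

lemma bruhatLt_simple_mul_left_iff : BruhatLt cs (cs.simple i * x) x ↔ cs.IsLeftDescent x i :=
  ⟨fun h => lt_of_le_of_ne h.1.length_le (cs.length_simple_mul_ne x i),
    fun h => ⟨.single (bruhatCov_simple_mul_of_isLeftDescent h), simple_mul_ne_self⟩⟩

lemma bruhatLt_simple_mul_right_iff : BruhatLt cs x (cs.simple i * x) ↔ ¬ cs.IsLeftDescent x i :=
  ⟨fun h => not_lt.mpr h.1.length_le,
    fun h => ⟨.single (bruhatCov_simple_mul h), simple_mul_ne_self.symm⟩⟩

lemma psi_of_isLeftDescent (h : cs.IsLeftDescent x i) : psi cs i x = cs.simple i * x :=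
  if_pos (bruhatLt_simple_mul_left_iff.mpr h)

lemma psi_of_not_isLeftDescent (h : ¬ cs.IsLeftDescent x i) : psi cs i x = x :=
  if_neg (mt bruhatLt_simple_mul_left_iff.mp h)

lemma phi_of_isLeftDescent (h : cs.IsLeftDescent x i) : phi cs i x = x :=
  if_neg (fun hlt => bruhatLt_simple_mul_right_iff.mp hlt h)

lemma phi_of_not_isLeftDescent (h : ¬ cs.IsLeftDescent x i) : phi cs i x = cs.simple i * x :=
  if_pos (bruhatLt_simple_mul_right_iff.mpr h)

lemma BruhatCov.simple_mul_eq (hcov : BruhatCov cs u w) (hu : ¬ cs.IsLeftDescent u i)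
    (hw : cs.IsLeftDescent w i) : cs.simple i * u = w := by
  obtain ⟨hl, t, ht, rfl⟩ := hcov
  obtain ⟨ρ, hρ, hρw⟩ := cs.exists_isReduced (cs.simple i * (t * u))
  have hword : t * u = cs.wordProd (i :: ρ) := by
    rw [cs.wordProd_cons, ← hρw, cs.simple_mul_simple_cancel_left]
  have hinv : cs.IsLeftInversion (cs.wordProd (i :: ρ)) t :=
    ⟨ht, by rw [← hword, ← mul_assoc, ht.mul_self, one_mul]; omega⟩
  have hmem := mem_leftInvSeq_of_isLeftInversion hinv
  rw [leftInvSeq, List.mem_cons, List.mem_map] at hmem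
  obtain rfl | ⟨t', ht', rfl⟩ := hmem
  · rfl
  -- otherwise `t = s t' s` with `t'` a left inversion of `s w`, and `t' (s w) = s u` is too short
  have hsu : t' * (cs.simple i * (MulAut.conj (cs.simple i) t' * u)) = cs.simple i * u := by
    rw [MulAut.conj_apply, cs.inv_simple]
    simp only [mul_assoc, cs.simple_mul_simple_cancel_left]
    rw [← mul_assoc, (cs.isReflection_of_mem_leftInvSeq ρ ht').mul_self, one_mul]
  have := (cs.isLeftInversion_of_mem_leftInvSeq hρ ht').2
  rw [← hρw, hsu] at this
  have := cs.not_isLeftDescent_iff.mp hu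
  have := cs.isLeftDescent_iff.mp hw
  omega

lemma BruhatCov.simple_mul (hcov : BruhatCov cs u w)
    (hdesc : cs.IsLeftDescent u i ↔ cs.IsLeftDescent w i) :
    BruhatCov cs (cs.simple i * u) (cs.simple i * w) := by
  obtain ⟨hl, t, ht, rfl⟩ := hcov
  refine ⟨?_, cs.simple i * t * cs.simple i, ?_, by simp [mul_assoc]⟩
  · by_cases hu : cs.IsLeftDescent u i
    · have := cs.isLeftDescent_iff.mp hu
      have := cs.isLeftDescent_iff.mp (hdesc.mp hu)
      omega
    · have := cs.not_isLeftDescent_iff.mp hu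
      have := cs.not_isLeftDescent_iff.mp (mt hdesc.mpr hu)
      omega
  · simpa [cs.inv_simple] using ht.conj (cs.simple i)

lemma BruhatCov.psi_le (hcov : BruhatCov cs u w) : BruhatLe cs (psi cs i u) (psi cs i w) := by
  by_cases hu : cs.IsLeftDescent u i <;> by_cases hw : cs.IsLeftDescent w i
  · rw [psi_of_isLeftDescent hu, psi_of_isLeftDescent hw]
    exact .single (hcov.simple_mul (iff_of_true hu hw))
  · rw [psi_of_isLeftDescent hu, psi_of_not_isLeftDescent hw]
    exact .head (bruhatCov_simple_mul_of_isLeftDescent hu) (.single hcov)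
  · rw [psi_of_not_isLeftDescent hu, psi_of_isLeftDescent hw, ← hcov.simple_mul_eq hu hw,
      cs.simple_mul_simple_cancel_left]
    exact .refl
  · rw [psi_of_not_isLeftDescent hu, psi_of_not_isLeftDescent hw]
    exact .single hcov

lemma BruhatCov.phi_le (hcov : BruhatCov cs u w) : BruhatLe cs (phi cs i u) (phi cs i w) := by
  by_cases hu : cs.IsLeftDescent u i <;> by_cases hw : cs.IsLeftDescent w i
  · rw [phi_of_isLeftDescent hu, phi_of_isLeftDescent hw]
    exact .single hcov
  · rw [phi_of_isLeftDescent hu, phi_of_not_isLeftDescent hw]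
    exact .tail (.single hcov) (bruhatCov_simple_mul hw)
  · rw [phi_of_not_isLeftDescent hu, phi_of_isLeftDescent hw, hcov.simple_mul_eq hu hw]
    exact .refl
  · rw [phi_of_not_isLeftDescent hu, phi_of_not_isLeftDescent hw]
    exact .single (hcov.simple_mul (iff_of_false hu hw))

lemma psi_mono (h : BruhatLe cs u w) : BruhatLe cs (psi cs i u) (psi cs i w) :=
  ReflTransGen.lift' (psi cs i) (fun _ _ => BruhatCov.psi_le) _ _ h

lemma phi_mono (h : BruhatLe cs u w) : BruhatLe cs (phi cs i u) (phi cs i w) :=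
  ReflTransGen.lift' (phi cs i) (fun _ _ => BruhatCov.phi_le) _ _ h

lemma le_phi_psi : BruhatLe cs x (phi cs i (psi cs i x)) := by
  by_cases h : cs.IsLeftDescent x i
  · rw [psi_of_isLeftDescent h,
      phi_of_not_isLeftDescent (cs.isLeftDescent_iff_not_isLeftDescent_mul.mp h),
      cs.simple_mul_simple_cancel_left]
    exact .refl
  · rw [psi_of_not_isLeftDescent h, phi_of_not_isLeftDescent h]
    exact .single (bruhatCov_simple_mul h)

lemma psi_phi_le : BruhatLe cs (psi cs i (phi cs i x)) x := by
  by_cases h : cs.IsLeftDescent x i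
  · rw [phi_of_isLeftDescent h, psi_of_isLeftDescent h]
    exact .single (bruhatCov_simple_mul_of_isLeftDescent h)
  · have hs : cs.IsLeftDescent (cs.simple i * x) i :=
      cs.isLeftDescent_iff_not_isLeftDescent_mul.mpr (by rwa [cs.simple_mul_simple_cancel_left])
    rw [phi_of_not_isLeftDescent h, psi_of_isLeftDescent hs, cs.simple_mul_simple_cancel_left]
    exact .refl

lemma psi_le_iff_le_phi : BruhatLe cs (psi cs i x) z ↔ BruhatLe cs x (phi cs i z) :=
  ⟨fun h => le_phi_psi.trans (phi_mono h), fun h => (psi_mono h).trans psi_phi_le⟩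

end Bruhat

theorem stmt8 (cs : CoxeterSystem M W) (i : B) (v w j : W)
    (h₁ : BruhatLe cs v j) (h₂ : BruhatLe cs w j)
    (hmin : ∀ z, BruhatLe cs v z → BruhatLe cs w z → BruhatLe cs j z) :
    BruhatLe cs (psi cs i v) (psi cs i j) ∧ BruhatLe cs (psi cs i w) (psi cs i j) ∧
      ∀ z, BruhatLe cs (psi cs i v) z → BruhatLe cs (psi cs i w) z →
        BruhatLe cs (psi cs i j) z := by
  refine ⟨psi_mono h₁, psi_mono h₂, fun z hv hw => ?_⟩
  rw [psi_le_iff_le_phi] at hv hw ⊢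
  exact hmin _ hv hw

end PaperStmt
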